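/- Let n be a positive integer, let w be symmetric nonnegative weights on {1,…,n}, let p ≥ 2, and let Δ_p be the associated graph p-Laplacian. Let f : ℝ → ℝⁿ be any forcing term, and suppose u, v : ℝ → ℝⁿ are differentiable and both satisfy the evolution equation x′(t) = −Δ_p x(t) + f(t) for all t ≥ 0. Then the nonlinear semigroup generated by Δ_p is a contraction: the map t ↦ ‖u(t) − v(t)‖ is nonincreasing on [0, ∞); in particular, if u(0) = v(0) then u(t) = v(t) for all t ≥ 0. -/

import Mathlib

open Real Finset
open scoped RealInnerProductSpace

/-- The graph `p`-Laplacian on a weighted graph with `n` nodes: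
`(Δ_p u)_i = Σ_j w i j * |u_i - u_j|^(p-2) (u_i - u_j)`, where the real power is `rpow`
(so that `|x|^(p-2) x = 0` when `x = 0`, for any `p`). -/
noncomputable def graphPLap {n : ℕ} (w : Fin n → Fin n → ℝ) (p : ℝ)
    (u : EuclideanSpace ℝ (Fin n)) : EuclideanSpace ℝ (Fin n) :=
  WithLp.toLp 2 (fun i => ∑ j, w i j * (|u i - u j| ^ (p - 2) * (u i - u j)))

/-! The graph `p`-Laplacian is monotone: by summation by parts over the symmetric weights,
`2 ⟪Δ_p a - Δ_p b, a - b⟫ = Σ_{i,j} w i j (φ x_ij - φ y_ij) (x_ij - y_ij)` with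
`x_ij = a i - a j`, `y_ij = b i - b j` and `φ x = |x|^(p-2) x` increasing. Hence the derivative
`-2 ⟪Δ_p u - Δ_p v, u - v⟫` of `‖u - v‖²` along two solutions is nonpositive. -/

lemma monotoneOn_rpow_mul_self {r : ℝ} (hr : -1 ≤ r) :
    MonotoneOn (fun x : ℝ => x ^ r * x) (Set.Ici 0) := by
  intro x hx y hy hxy
  rcases (Set.mem_Ici.1 hx).eq_or_lt with rfl | hx0
  · simpa using mul_nonneg (rpow_nonneg (Set.mem_Ici.1 hy) r) (Set.mem_Ici.1 hy)
  · simp only [← rpow_add_one hx0.ne', ← rpow_add_one (hx0.trans_le hxy).ne']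
    exact rpow_le_rpow hx0.le hxy (by linarith)

lemma monotone_abs_rpow_mul_self {r : ℝ} (hr : -1 ≤ r) : Monotone (fun x : ℝ => |x| ^ r * x) :=
  monotone_of_odd_of_monotoneOn_nonneg (fun x => by simp only [abs_neg, mul_neg])
    ((monotoneOn_rpow_mul_self hr).congr fun x hx => by rw [abs_of_nonneg (Set.mem_Ici.1 hx)])

lemma Monotone.sub_mul_sub_nonneg {R : Type*} [Ring R] [LinearOrder R] [IsStrictOrderedRing R]
    {f : R → R} (hf : Monotone f) (x y : R) :
    0 ≤ (f x - f y) * (x - y) := by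
  rcases le_total x y with h | h
  · exact mul_nonneg_of_nonpos_of_nonpos (sub_nonpos.2 (hf h)) (sub_nonpos.2 h)
  · exact mul_nonneg (sub_nonneg.2 (hf h)) (sub_nonneg.2 h)

/-- Summation by parts on a graph. -/
lemma two_mul_sum_sum_mul_eq_of_antisymm {ι R : Type*} [Fintype ι] [CommRing R]
    {G : ι → ι → R} (hG : ∀ i j, G j i = -G i j) (c : ι → R) :
    2 * ∑ i, ∑ j, G i j * c i = ∑ i, ∑ j, G i j * (c i - c j) := by
  have hswap : ∑ i, ∑ j, G i j * c j = -∑ i, ∑ j, G i j * c i := by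
    rw [Finset.sum_comm, ← Finset.sum_neg_distrib]
    refine Finset.sum_congr rfl fun i _ => ?_
    rw [← Finset.sum_neg_distrib]
    exact Finset.sum_congr rfl fun j _ => by rw [hG]; ring
  simp only [mul_sub, Finset.sum_sub_distrib, hswap]
  ring

theorem inner_graphPLap_sub_nonneg {n : ℕ} {w : Fin n → Fin n → ℝ}
    (hsym : ∀ i j, w i j = w j i) (hw : ∀ i j, 0 ≤ w i j) {p : ℝ} (hp : 1 ≤ p)
    (a b : EuclideanSpace ℝ (Fin n)) :
    0 ≤ ⟪graphPLap w p a - graphPLap w p b, a - b⟫ := by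
  set φ : ℝ → ℝ := fun x => |x| ^ (p - 2) * x
  set G : Fin n → Fin n → ℝ := fun i j => w i j * (φ (a i - a j) - φ (b i - b j))
  have hG : ∀ i j, G j i = -G i j := fun i j => by
    simp only [G, φ, hsym j i, ← neg_sub (a i) (a j), ← neg_sub (b i) (b j), abs_neg]
    ring
  have hinner : ⟪graphPLap w p a - graphPLap w p b, a - b⟫ = ∑ i, ∑ j, G i j * (a i - b i) := by
    simp only [PiLp.inner_apply, graphPLap, PiLp.sub_apply, RCLike.inner_apply', conj_trivial,
      ← Finset.sum_sub_distrib, Finset.sum_mul, G, φ]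
    exact Finset.sum_congr rfl fun i _ => Finset.sum_congr rfl fun j _ => by ring
  have hterm : ∀ i j, 0 ≤ G i j * ((a i - b i) - (a j - b j)) := fun i j => by
    have hφ := (monotone_abs_rpow_mul_self (by linarith : -1 ≤ p - 2)).sub_mul_sub_nonneg
      (a i - a j) (b i - b j)
    calc 0 ≤ w i j * ((φ (a i - a j) - φ (b i - b j)) * ((a i - a j) - (b i - b j))) :=
          mul_nonneg (hw i j) hφ
      _ = _ := by simp only [G]; ring
  have hsum := two_mul_sum_sum_mul_eq_of_antisymm hG (fun i => a i - b i)
  have hnonneg : 0 ≤ ∑ i, ∑ j, G i j * ((a i - b i) - (a j - b j)) :=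
    Finset.sum_nonneg fun i _ => Finset.sum_nonneg fun j _ => hterm i j
  rw [hinner]
  linarith

theorem antitoneOn_norm_of_inner_deriv_nonpos {E : Type*} [NormedAddCommGroup E]
    [InnerProductSpace ℝ E] {D : Set ℝ} (hD : Convex ℝ D) {d d' : ℝ → E}
    (hd : ∀ t ∈ D, HasDerivWithinAt d (d' t) D t) (hdd' : ∀ t ∈ D, ⟪d t, d' t⟫ ≤ 0) :
    AntitoneOn (fun t => ‖d t‖) D := by
  have hsq : AntitoneOn (fun t => ‖d t‖ ^ 2) D :=
    antitoneOn_of_hasDerivWithinAt_nonpos hD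
      (fun t ht => (hd t ht).norm_sq.continuousWithinAt)
      (fun t ht => ((hd t (interior_subset ht)).mono interior_subset).norm_sq)
      (fun t ht => by linarith [hdd' t (interior_subset ht)])
  exact fun s hs t ht hst =>
    (pow_le_pow_iff_left₀ (norm_nonneg _) (norm_nonneg _) two_ne_zero).1 (hsq hs ht hst)

theorem graphPLap_semigroup_contraction_general {n : ℕ}
    (w : Fin n → Fin n → ℝ)
    (hsym : ∀ i j, w i j = w j i) (hw : ∀ i j, 0 ≤ w i j) (p : ℝ) (hp : 2 ≤ p)
    (f : ℝ → EuclideanSpace ℝ (Fin n))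
    (u v : ℝ → EuclideanSpace ℝ (Fin n))
    (hu : ∀ t : ℝ, 0 ≤ t → HasDerivAt u (-(graphPLap w p (u t)) + f t) t)
    (hv : ∀ t : ℝ, 0 ≤ t → HasDerivAt v (-(graphPLap w p (v t)) + f t) t) :
    AntitoneOn (fun t => ‖u t - v t‖) (Set.Ici 0) ∧
      (u 0 = v 0 → ∀ t : ℝ, 0 ≤ t → u t = v t) := by
  have hdiff : ∀ t ∈ Set.Ici (0 : ℝ), HasDerivWithinAt (fun t => u t - v t)
      (-(graphPLap w p (u t) - graphPLap w p (v t))) (Set.Ici 0) t :=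
    fun t ht => ((hu t ht).sub (hv t ht)).hasDerivWithinAt.congr_deriv (by abel)
  have hanti : AntitoneOn (fun t => ‖u t - v t‖) (Set.Ici 0) :=
    antitoneOn_norm_of_inner_deriv_nonpos (convex_Ici 0) hdiff fun t _ => by
      rw [inner_neg_right, real_inner_comm]
      exact neg_nonpos.2 (inner_graphPLap_sub_nonneg hsym hw (by linarith) _ _)
  refine ⟨hanti, fun h0 t ht => ?_⟩
  have hle : ‖u t - v t‖ ≤ ‖u 0 - v 0‖ := hanti Set.self_mem_Ici ht ht
  rw [h0, sub_self, norm_zero] at hle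
  exact sub_eq_zero.1 (norm_le_zero_iff.1 hle)

/-- Contraction of the nonlinear semigroup generated by Δ_p: two solutions of the
same forced equation approach each other; in particular solutions are unique. -/
theorem graphPLap_semigroup_contraction {n : ℕ} (hn : 0 < n)
    (w : Fin n → Fin n → ℝ)
    (hsym : ∀ i j, w i j = w j i) (hw : ∀ i j, 0 ≤ w i j) (p : ℝ) (hp : 2 ≤ p)
    (f : ℝ → EuclideanSpace ℝ (Fin n))
    (u v : ℝ → EuclideanSpace ℝ (Fin n))
    (hu : ∀ t : ℝ, 0 ≤ t → HasDerivAt u (-(graphPLap w p (u t)) + f t) t)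
    (hv : ∀ t : ℝ, 0 ≤ t → HasDerivAt v (-(graphPLap w p (v t)) + f t) t) :
    AntitoneOn (fun t => ‖u t - v t‖) (Set.Ici 0) ∧
      (u 0 = v 0 → ∀ t : ℝ, 0 ≤ t → u t = v t) :=
  graphPLap_semigroup_contraction_general w hsym hw p hp f u v hu hv
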